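/- (Weighted Turán bound for K₅-free graphs.) For every ε > 0 there exists n₀ such that the following holds for all n ≥ n₀. Let G be a K₅-free graph on n vertices and define a weight w on the edges of G by: w(e) := 2/3 if e is contained in some K₄ of G; w(e) := 4/5 if e is contained in some triangle of G but in no K₄ of G; and w(e) := 1 otherwise. Then Σ_{e ∈ E(G)} w(e) ≤ (4/15 + ε)·n². -/
import Mathlib


open Finset

/-- The edge set of a graph on a finite vertex type, as a `Finset`. -/
noncomputable def edgeFinset' {V : Type*} [Fintype V] (G : SimpleGraph V) : Finset (Sym2 V) :=
  by classical exact G.edgeFinset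

open Classical in
/-- The weight of an edge of a `K₅`-free graph: `2/3` if it lies in a `K₄`,
`4/5` if it lies in a triangle but no `K₄`, and `1` otherwise. -/
noncomputable def wK5 {V : Type*} (G : SimpleGraph V) (e : Sym2 V) : ℝ :=
  if ∃ s : Finset V, G.IsNClique 4 s ∧ ∀ v ∈ e, v ∈ s then 2 / 3
  else if ∃ s : Finset V, G.IsNClique 3 s ∧ ∀ v ∈ e, v ∈ s then 4 / 5
  else 1

namespace WTaux

attribute [local instance] Classical.propDecidable

variable {V : Type*}

/-- Relative weight: like `wK5` but only cliques inside `A` count. -/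
noncomputable def wA (G : SimpleGraph V) (A : Finset V) (e : Sym2 V) : ℝ :=
  if ∃ s : Finset V, s ⊆ A ∧ G.IsNClique 4 s ∧ ∀ v ∈ e, v ∈ s then 2 / 3
  else if ∃ s : Finset V, s ⊆ A ∧ G.IsNClique 3 s ∧ ∀ v ∈ e, v ∈ s then 4 / 5
  else 1

/-- The edges of `G` with both endpoints in `A`. -/
noncomputable def EA [Fintype V] (G : SimpleGraph V) (A : Finset V) : Finset (Sym2 V) :=
  univ.filter (fun e => e ∈ G.edgeSet ∧ ∀ v ∈ e, v ∈ A)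

lemma mem_EA [Fintype V] {G : SimpleGraph V} {A : Finset V} {e : Sym2 V} :
    e ∈ EA G A ↔ e ∈ G.edgeSet ∧ ∀ v ∈ e, v ∈ A := by
  simp [EA]

lemma wA_nonneg (G : SimpleGraph V) (A : Finset V) (e : Sym2 V) : 0 ≤ wA G A e := by
  rw [wA]; split_ifs <;> norm_num

lemma wA_le_one (G : SimpleGraph V) (A : Finset V) (e : Sym2 V) : wA G A e ≤ 1 := by
  rw [wA]; split_ifs <;> norm_num

lemma wA_of_four {G : SimpleGraph V} {A : Finset V} {e : Sym2 V}
    (h : ∃ s : Finset V, s ⊆ A ∧ G.IsNClique 4 s ∧ ∀ v ∈ e, v ∈ s) : wA G A e = 2 / 3 := by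
  rw [wA, if_pos h]

lemma wA_le_of_three {G : SimpleGraph V} {A : Finset V} {e : Sym2 V}
    (h : ∃ s : Finset V, s ⊆ A ∧ G.IsNClique 3 s ∧ ∀ v ∈ e, v ∈ s) : wA G A e ≤ 4 / 5 := by
  rw [wA]
  split_ifs <;> norm_num

lemma wA_mono {G : SimpleGraph V} {A B : Finset V} (hAB : A ⊆ B) (e : Sym2 V) :
    wA G B e ≤ wA G A e := by
  by_cases h4 : ∃ s : Finset V, s ⊆ A ∧ G.IsNClique 4 s ∧ ∀ v ∈ e, v ∈ s
  · obtain ⟨s, hs, h1, h2⟩ := h4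
    rw [wA_of_four ⟨s, hs, h1, h2⟩, wA_of_four ⟨s, hs.trans hAB, h1, h2⟩]
  · by_cases h3 : ∃ s : Finset V, s ⊆ A ∧ G.IsNClique 3 s ∧ ∀ v ∈ e, v ∈ s
    · obtain ⟨s, hs, h1, h2⟩ := h3
      have hA : wA G A e = 4 / 5 := by rw [wA, if_neg h4, if_pos ⟨s, hs, h1, h2⟩]
      rw [hA]
      exact wA_le_of_three ⟨s, hs.trans hAB, h1, h2⟩
    · have hA : wA G A e = 1 := by rw [wA, if_neg h4, if_neg h3]
      rw [hA]; exact wA_le_one _ _ _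

lemma ext_clique {G : SimpleGraph V} {Q : Finset V} {q : ℕ} (hQ : G.IsNClique q Q)
    {u : V} (huQ : u ∉ Q) :
    G.IsNClique ((Q.filter (G.Adj u)).card + 1) (insert u (Q.filter (G.Adj u))) := by
  have h1 : G.IsNClique (Q.filter (G.Adj u)).card (Q.filter (G.Adj u)) :=
    ⟨hQ.isClique.subset (by exact_mod_cast Finset.filter_subset _ _), rfl⟩
  exact h1.insert (fun b hb => (Finset.mem_filter.mp hb).2)

lemma EA_endpoints [Fintype V] {G : SimpleGraph V} {A : Finset V} {e : Sym2 V}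
    (he : e ∈ EA G A) :
    ∃ x y, e = s(x, y) ∧ G.Adj x y ∧ x ∈ A ∧ y ∈ A := by
  induction e using Sym2.ind with
  | _ x y =>
    rw [mem_EA] at he
    obtain ⟨hadj, hA⟩ := he
    exact ⟨x, y, rfl, G.mem_edgeSet.mp hadj, hA x (by simp), hA y (by simp)⟩

lemma pv4 {G : SimpleGraph V} (h5 : G.CliqueFree 5) {A Q : Finset V} (hQA : Q ⊆ A)
    (hQ : G.IsNClique 4 Q) {u : V} (hu : u ∈ A) (huQ : u ∉ Q) :
    ∑ x ∈ Q.filter (G.Adj u), wA G A s(u, x) ≤ 2 := by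
  have hNQ : Q.filter (G.Adj u) ⊆ Q := filter_subset _ _
  have hkle : (Q.filter (G.Adj u)).card ≤ 4 := by
    have h := card_le_card hNQ; rwa [hQ.card_eq] at h
  have hne : (Q.filter (G.Adj u)).card ≠ 4 := by
    intro hk
    have hNeq : Q.filter (G.Adj u) = Q :=
      eq_of_subset_of_card_le hNQ (by rw [hQ.card_eq, hk])
    have h5' := ext_clique hQ huQ
    rw [hk, hNeq] at h5'
    exact h5 _ h5'
  rcases Nat.lt_or_ge (Q.filter (G.Adj u)).card 3 with hk | hk
  · calc ∑ x ∈ Q.filter (G.Adj u), wA G A s(u, x)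
        ≤ (Q.filter (G.Adj u)).card • (1 : ℝ) :=
          sum_le_card_nsmul _ _ _ (fun x _ => wA_le_one _ _ _)
      _ ≤ 2 := by
          rw [nsmul_eq_mul, mul_one]
          have : (Q.filter (G.Adj u)).card ≤ 2 := by omega
          exact_mod_cast this
  · have hk3 : (Q.filter (G.Adj u)).card = 3 := by omega
    have hcl : G.IsNClique 4 (insert u (Q.filter (G.Adj u))) := by
      have h := ext_clique hQ huQ; rwa [hk3] at h
    have hsub : insert u (Q.filter (G.Adj u)) ⊆ A :=
      insert_subset hu (hNQ.trans hQA)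
    calc ∑ x ∈ Q.filter (G.Adj u), wA G A s(u, x)
        ≤ (Q.filter (G.Adj u)).card • ((2 : ℝ) / 3) := by
          refine sum_le_card_nsmul _ _ _ (fun x hx => ?_)
          refine le_of_eq (wA_of_four ⟨_, hsub, hcl, ?_⟩)
          intro v hv
          rcases Sym2.mem_iff.mp hv with rfl | rfl
          · exact mem_insert_self _ _
          · exact mem_insert_of_mem hx
      _ = 2 := by rw [hk3]; norm_num

lemma pv3 {G : SimpleGraph V} {A Q : Finset V}
    (h4 : ¬ ∃ s : Finset V, s ⊆ A ∧ G.IsNClique 4 s) (hQA : Q ⊆ A)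
    (hQ : G.IsNClique 3 Q) {u : V} (hu : u ∈ A) (huQ : u ∉ Q) :
    ∑ x ∈ Q.filter (G.Adj u), wA G A s(u, x) ≤ 8 / 5 := by
  have hNQ : Q.filter (G.Adj u) ⊆ Q := filter_subset _ _
  have hkle : (Q.filter (G.Adj u)).card ≤ 3 := by
    have h := card_le_card hNQ; rwa [hQ.card_eq] at h
  have hne : (Q.filter (G.Adj u)).card ≠ 3 := by
    intro hk
    have hNeq : Q.filter (G.Adj u) = Q :=
      eq_of_subset_of_card_le hNQ (by rw [hQ.card_eq, hk])
    have hcl := ext_clique hQ huQ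
    rw [hk, hNeq] at hcl
    exact h4 ⟨insert u Q, insert_subset hu hQA, hcl⟩
  rcases Nat.lt_or_ge (Q.filter (G.Adj u)).card 2 with hk | hk
  · calc ∑ x ∈ Q.filter (G.Adj u), wA G A s(u, x)
        ≤ (Q.filter (G.Adj u)).card • (1 : ℝ) :=
          sum_le_card_nsmul _ _ _ (fun x _ => wA_le_one _ _ _)
      _ ≤ 8 / 5 := by
          rw [nsmul_eq_mul, mul_one]
          have h1 : (Q.filter (G.Adj u)).card ≤ 1 := by omega
          have h2 : ((Q.filter (G.Adj u)).card : ℝ) ≤ 1 := by exact_mod_cast h1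
          linarith
  · have hk2 : (Q.filter (G.Adj u)).card = 2 := by omega
    have hcl : G.IsNClique 3 (insert u (Q.filter (G.Adj u))) := by
      have h := ext_clique hQ huQ; rwa [hk2] at h
    have hsub : insert u (Q.filter (G.Adj u)) ⊆ A :=
      insert_subset hu (hNQ.trans hQA)
    calc ∑ x ∈ Q.filter (G.Adj u), wA G A s(u, x)
        ≤ (Q.filter (G.Adj u)).card • ((4 : ℝ) / 5) := by
          refine sum_le_card_nsmul _ _ _ (fun x hx => ?_)
          refine wA_le_of_three ⟨_, hsub, hcl, ?_⟩
          intro v hv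
          rcases Sym2.mem_iff.mp hv with rfl | rfl
          · exact mem_insert_self _ _
          · exact mem_insert_of_mem hx
      _ = 8 / 5 := by rw [hk2]; norm_num

lemma pv2 {G : SimpleGraph V} {A Q : Finset V}
    (h3 : ¬ ∃ s : Finset V, s ⊆ A ∧ G.IsNClique 3 s) (hQA : Q ⊆ A)
    (hQ : G.IsNClique 2 Q) {u : V} (hu : u ∈ A) (huQ : u ∉ Q) :
    ∑ x ∈ Q.filter (G.Adj u), wA G A s(u, x) ≤ 1 := by
  have hNQ : Q.filter (G.Adj u) ⊆ Q := filter_subset _ _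
  have hkle : (Q.filter (G.Adj u)).card ≤ 2 := by
    have h := card_le_card hNQ; rwa [hQ.card_eq] at h
  have hne : (Q.filter (G.Adj u)).card ≠ 2 := by
    intro hk
    have hNeq : Q.filter (G.Adj u) = Q :=
      eq_of_subset_of_card_le hNQ (by rw [hQ.card_eq, hk])
    have hcl := ext_clique hQ huQ
    rw [hk, hNeq] at hcl
    exact h3 ⟨insert u Q, insert_subset hu hQA, hcl⟩
  calc ∑ x ∈ Q.filter (G.Adj u), wA G A s(u, x)
      ≤ (Q.filter (G.Adj u)).card • (1 : ℝ) :=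
        sum_le_card_nsmul _ _ _ (fun x _ => wA_le_one _ _ _)
    _ ≤ 1 := by
        rw [nsmul_eq_mul, mul_one]
        have h1 : (Q.filter (G.Adj u)).card ≤ 1 := by omega
        exact_mod_cast h1

lemma step [Fintype V] {G : SimpleGraph V} {A Q : Finset V} (hQA : Q ⊆ A) {q : ℕ}
    (hQ : G.IsNClique q Q) {wq B : ℝ} (hwq0 : 0 ≤ wq)
    (hin : ∀ e ∈ EA G A, (∀ v ∈ e, v ∈ Q) → wA G A e ≤ wq)
    (hcross : ∀ u ∈ A \ Q, ∑ x ∈ Q.filter (G.Adj u), wA G A s(u, x) ≤ B) :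
    ∑ e ∈ EA G A, wA G A e ≤
      (∑ e ∈ EA G (A \ Q), wA G (A \ Q) e) + wq * ((q : ℝ) * ((q : ℝ) - 1) / 2)
        + B * (((A \ Q).card : ℝ)) := by
  -- first split: edges avoiding Q vs edges meeting Q
  have hsplit1 :
      ∑ e ∈ EA G A, wA G A e
        = ∑ e ∈ (EA G A).filter (fun e => ∀ v ∈ e, v ∉ Q), wA G A e
          + ∑ e ∈ (EA G A).filter (fun e => ¬ ∀ v ∈ e, v ∉ Q), wA G A e :=
    (sum_filter_add_sum_filter_not _ _ _).symm
  have hEq1 : (EA G A).filter (fun e => ∀ v ∈ e, v ∉ Q) = EA G (A \ Q) := by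
    ext e
    simp only [mem_filter, mem_EA, Finset.mem_sdiff]
    constructor
    · rintro ⟨⟨he, hA⟩, hq⟩
      exact ⟨he, fun v hv => ⟨hA v hv, hq v hv⟩⟩
    · rintro ⟨he, h⟩
      exact ⟨⟨he, fun v hv => (h v hv).1⟩, fun v hv => (h v hv).2⟩
  have hbound1 :
      ∑ e ∈ (EA G A).filter (fun e => ∀ v ∈ e, v ∉ Q), wA G A e
        ≤ ∑ e ∈ EA G (A \ Q), wA G (A \ Q) e := by
    rw [hEq1]
    exact sum_le_sum (fun e _ => wA_mono sdiff_subset e)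
  -- second split of edges meeting Q : fully inside Q vs crossing
  have hsplit2 :
      ∑ e ∈ (EA G A).filter (fun e => ¬ ∀ v ∈ e, v ∉ Q), wA G A e
        = ∑ e ∈ ((EA G A).filter (fun e => ¬ ∀ v ∈ e, v ∉ Q)).filter
              (fun e => ∀ v ∈ e, v ∈ Q), wA G A e
          + ∑ e ∈ ((EA G A).filter (fun e => ¬ ∀ v ∈ e, v ∉ Q)).filter
              (fun e => ¬ ∀ v ∈ e, v ∈ Q), wA G A e :=
    (sum_filter_add_sum_filter_not _ _ _).symm
  -- the internal part
  have hDinsub :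
      ((EA G A).filter (fun e => ¬ ∀ v ∈ e, v ∉ Q)).filter (fun e => ∀ v ∈ e, v ∈ Q)
        ∪ Q.image Sym2.diag ⊆ Q.sym2 := by
    intro e he
    rcases mem_union.mp he with he | he
    · rw [Finset.mem_sym2_iff]
      exact fun a ha => (mem_filter.mp he).2 a ha
    · obtain ⟨a, ha, rfl⟩ := mem_image.mp he
      exact Finset.mk_mem_sym2_iff.mpr ⟨ha, ha⟩
  have hdisj : Disjoint
      (((EA G A).filter (fun e => ¬ ∀ v ∈ e, v ∉ Q)).filter (fun e => ∀ v ∈ e, v ∈ Q))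
      (Q.image Sym2.diag) := by
    rw [Finset.disjoint_left]
    intro e he1 he2
    have hedge : e ∈ G.edgeSet := (mem_EA.mp (mem_filter.mp (mem_filter.mp he1).1).1).1
    obtain ⟨a, _, rfl⟩ := mem_image.mp he2
    exact (G.not_isDiag_of_mem_edgeSet hedge) (Sym2.diag_isDiag a)
  have hcards :
      (((EA G A).filter (fun e => ¬ ∀ v ∈ e, v ∉ Q)).filter (fun e => ∀ v ∈ e, v ∈ Q)).card
        + Q.card ≤ Q.sym2.card := by
    have h1 := card_le_card hDinsub
    rwa [card_union_of_disjoint hdisj, card_image_of_injective _ Sym2.diag_injective] at h1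
  have hDincard :
      ((((EA G A).filter (fun e => ¬ ∀ v ∈ e, v ∉ Q)).filter
          (fun e => ∀ v ∈ e, v ∈ Q)).card : ℝ)
        ≤ (q : ℝ) * ((q : ℝ) - 1) / 2 := by
    have hsym2 : Q.sym2.card = (Q.card + 1) * Q.card / 2 := by
      rw [Finset.card_sym2, Nat.choose_two_right]
      simp
    have h2 : (((Q.card + 1) * Q.card / 2 : ℕ) : ℝ) ≤ ((Q.card : ℝ) + 1) * (Q.card : ℝ) / 2 := by
      calc (((Q.card + 1) * Q.card / 2 : ℕ) : ℝ)
          ≤ (((Q.card + 1) * Q.card : ℕ) : ℝ) / 2 := Nat.cast_div_le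
        _ = _ := by push_cast; ring
    have h3 := hcards
    rw [hsym2] at h3
    have h3' : ((((EA G A).filter (fun e => ¬ ∀ v ∈ e, v ∉ Q)).filter
          (fun e => ∀ v ∈ e, v ∈ Q)).card : ℝ) + (Q.card : ℝ)
        ≤ (((Q.card + 1) * Q.card / 2 : ℕ) : ℝ) := by exact_mod_cast h3
    have hq' : (Q.card : ℝ) = (q : ℝ) := by exact_mod_cast hQ.card_eq
    rw [hq'] at h3' h2
    nlinarith [h2, h3']
  have hDinsum :
      ∑ e ∈ ((EA G A).filter (fun e => ¬ ∀ v ∈ e, v ∉ Q)).filter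
          (fun e => ∀ v ∈ e, v ∈ Q), wA G A e
        ≤ wq * ((q : ℝ) * ((q : ℝ) - 1) / 2) := by
    have h1 : ∑ e ∈ ((EA G A).filter (fun e => ¬ ∀ v ∈ e, v ∉ Q)).filter
          (fun e => ∀ v ∈ e, v ∈ Q), wA G A e
        ≤ (((EA G A).filter (fun e => ¬ ∀ v ∈ e, v ∉ Q)).filter
          (fun e => ∀ v ∈ e, v ∈ Q)).card • wq := by
      refine sum_le_card_nsmul _ _ _ (fun e he => ?_)
      have h2 := mem_filter.mp he
      exact hin e (mem_filter.mp h2.1).1 h2.2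
    rw [nsmul_eq_mul] at h1
    calc ∑ e ∈ ((EA G A).filter (fun e => ¬ ∀ v ∈ e, v ∉ Q)).filter
          (fun e => ∀ v ∈ e, v ∈ Q), wA G A e
        ≤ _ := h1
      _ ≤ ((q : ℝ) * ((q : ℝ) - 1) / 2) * wq := mul_le_mul_of_nonneg_right hDincard hwq0
      _ = wq * ((q : ℝ) * ((q : ℝ) - 1) / 2) := mul_comm _ _
  -- the crossing part
  have hDceq : ((EA G A).filter (fun e => ¬ ∀ v ∈ e, v ∉ Q)).filter
        (fun e => ¬ ∀ v ∈ e, v ∈ Q)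
      = (A \ Q).biUnion (fun u => (Q.filter (G.Adj u)).image (fun x => s(u, x))) := by
    ext e
    induction e using Sym2.ind with
    | _ x y =>
      simp only [mem_filter, mem_EA, mem_biUnion, Finset.mem_sdiff, mem_image]
      constructor
      · rintro ⟨⟨⟨he, hA⟩, hq1⟩, hq2⟩
        have hadj : G.Adj x y := G.mem_edgeSet.mp he
        by_cases hxQ : x ∈ Q
        · have hyQ : y ∉ Q := by
            intro hy
            exact hq2 (fun v hv => by
              rcases Sym2.mem_iff.mp hv with rfl | rfl
              exacts [hxQ, hy])
          exact ⟨y, ⟨hA y (Sym2.mem_mk_right x y), hyQ⟩, x,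
            ⟨hxQ, hadj.symm⟩, Sym2.eq_swap⟩
        · have hyQ : y ∈ Q := by
            by_contra hy
            exact hq1 (fun v hv => by
              rcases Sym2.mem_iff.mp hv with rfl | rfl
              exacts [hxQ, hy])
          exact ⟨x, ⟨hA x (Sym2.mem_mk_left x y), hxQ⟩, y,
            ⟨hyQ, hadj⟩, rfl⟩
      · rintro ⟨u, hu, z, hz, hzu⟩
        obtain ⟨huA, huQ⟩ := hu
        obtain ⟨hzQ, hadj⟩ := hz
        rw [← hzu]
        refine ⟨⟨⟨?_, ?_⟩, ?_⟩, ?_⟩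
        · exact G.mem_edgeSet.mpr hadj
        · intro v hv
          rcases Sym2.mem_iff.mp hv with rfl | rfl
          exacts [huA, hQA hzQ]
        · intro hall
          exact (hall z (Sym2.mem_mk_right u z)) hzQ
        · intro hall
          exact huQ (hall u (Sym2.mem_mk_left u z))
  have hdisjU : (↑(A \ Q) : Set V).PairwiseDisjoint
      (fun u => (Q.filter (G.Adj u)).image (fun x => s(u, x))) := by
    intro u hu v hv huv
    simp only [Function.onFun]
    rw [Finset.disjoint_left]
    intro e heu hev
    obtain ⟨xu, hxu, hexu⟩ := mem_image.mp heu
    obtain ⟨xv, hxv, hexv⟩ := mem_image.mp hev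
    have h := hexu.trans hexv.symm
    rcases Sym2.eq_iff.mp h with ⟨h1, _⟩ | ⟨h1, _⟩
    · exact huv h1
    · have huQ : u ∉ Q := (Finset.mem_sdiff.mp (Finset.mem_coe.mp hu)).2
      exact huQ (h1 ▸ (mem_filter.mp hxv).1)
  have hDcsum :
      ∑ e ∈ ((EA G A).filter (fun e => ¬ ∀ v ∈ e, v ∉ Q)).filter
          (fun e => ¬ ∀ v ∈ e, v ∈ Q), wA G A e
        ≤ B * (((A \ Q).card : ℝ)) := by
    rw [hDceq, sum_biUnion hdisjU]
    have h1 : ∀ u ∈ A \ Q,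
        ∑ e ∈ (Q.filter (G.Adj u)).image (fun x => s(u, x)), wA G A e ≤ B := by
      intro u hu
      rw [sum_image (fun x _ y _ hxy => by
        rcases Sym2.eq_iff.mp hxy with ⟨_, h⟩ | ⟨h1, h2⟩
        · exact h
        · exact h2.trans h1)]
      exact hcross u hu
    calc ∑ u ∈ A \ Q, ∑ e ∈ (Q.filter (G.Adj u)).image (fun x => s(u, x)), wA G A e
        ≤ ∑ _u ∈ A \ Q, B := sum_le_sum h1
      _ = B * (((A \ Q).card : ℝ)) := by rw [sum_const, nsmul_eq_mul]; ring
  linarith [hsplit1, hsplit2, hbound1, hDinsum, hDcsum]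

lemma main [Fintype V] {G : SimpleGraph V} (h5 : G.CliqueFree 5) :
    ∀ n : ℕ, ∀ A : Finset V, A.card ≤ n →
      ∑ e ∈ EA G A, wA G A e ≤ 4 / 15 * ((A.card : ℝ)) ^ 2 := by
  intro n
  induction n with
  | zero =>
    intro A hA
    have hA0 : A = ∅ := card_eq_zero.mp (Nat.le_zero.mp hA)
    subst hA0
    have hEA : EA G ∅ = ∅ := by
      rw [eq_empty_iff_forall_notMem]
      intro e he
      obtain ⟨x, _, _, _, hx, _⟩ := EA_endpoints he
      exact absurd hx (notMem_empty x)
    rw [hEA]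
    simp
  | succ n ih =>
    intro A hA
    by_cases hne : (EA G A).Nonempty
    swap
    · rw [not_nonempty_iff_eq_empty.mp hne, sum_empty]
      positivity
    by_cases h4 : ∃ s : Finset V, s ⊆ A ∧ G.IsNClique 4 s
    · obtain ⟨Q, hQA, hQ⟩ := h4
      have hm : 4 ≤ A.card := by
        have h := card_le_card hQA; rwa [hQ.card_eq] at h
      have hstep := step hQA hQ (by norm_num : (0:ℝ) ≤ 2/3)
        (fun e _ hv => le_of_eq (wA_of_four ⟨Q, hQA, hQ, hv⟩))
        (fun u hu => pv4 h5 hQA hQ (Finset.mem_sdiff.mp hu).1 (Finset.mem_sdiff.mp hu).2)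
      have hcard : (A \ Q).card = A.card - 4 := by rw [card_sdiff_of_subset hQA, hQ.card_eq]
      have hIH := ih (A \ Q) (by omega)
      have hc1 : ((A \ Q).card : ℝ) = (A.card : ℝ) - 4 := by
        rw [hcard, Nat.cast_sub hm]; norm_num
      have hm' : (4 : ℝ) ≤ (A.card : ℝ) := by exact_mod_cast hm
      rw [hc1] at hstep hIH
      push_cast at hstep hIH ⊢
      nlinarith [hstep, hIH, hm']
    · by_cases h3 : ∃ s : Finset V, s ⊆ A ∧ G.IsNClique 3 s
      · obtain ⟨Q, hQA, hQ⟩ := h3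
        have hm : 3 ≤ A.card := by
          have h := card_le_card hQA; rwa [hQ.card_eq] at h
        have hstep := step hQA hQ (by norm_num : (0:ℝ) ≤ 4/5)
          (fun e _ hv => wA_le_of_three ⟨Q, hQA, hQ, hv⟩)
          (fun u hu => pv3 h4 hQA hQ (Finset.mem_sdiff.mp hu).1 (Finset.mem_sdiff.mp hu).2)
        have hcard : (A \ Q).card = A.card - 3 := by rw [card_sdiff_of_subset hQA, hQ.card_eq]
        have hIH := ih (A \ Q) (by omega)
        have hc1 : ((A \ Q).card : ℝ) = (A.card : ℝ) - 3 := by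
          rw [hcard, Nat.cast_sub hm]; norm_num
        have hm' : (3 : ℝ) ≤ (A.card : ℝ) := by exact_mod_cast hm
        rw [hc1] at hstep hIH
        push_cast at hstep hIH ⊢
        nlinarith [hstep, hIH, hm']
      · obtain ⟨e, he⟩ := hne
        obtain ⟨x, y, rfl, hadj, hxA, hyA⟩ := EA_endpoints he
        have hQ : G.IsNClique 2 ({x, y} : Finset V) := by
          have h1 : G.IsNClique 1 ({y} : Finset V) := by
            constructor
            · simp [SimpleGraph.isClique_iff]
            · exact card_singleton y
          have h2 := h1.insert (a := x) (fun b hb => by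
            rw [Finset.mem_singleton.mp hb]; exact hadj)
          simpa using h2
        have hQA : ({x, y} : Finset V) ⊆ A :=
          insert_subset hxA (singleton_subset_iff.mpr hyA)
        have hm : 2 ≤ A.card := by
          have h := card_le_card hQA; rwa [hQ.card_eq] at h
        have hstep := step hQA hQ (by norm_num : (0:ℝ) ≤ 1)
          (fun e _ _ => wA_le_one _ _ _)
          (fun u hu => pv2 h3 hQA hQ (Finset.mem_sdiff.mp hu).1 (Finset.mem_sdiff.mp hu).2)
        have hcard : (A \ ({x, y} : Finset V)).card = A.card - 2 := by
          rw [card_sdiff_of_subset hQA, hQ.card_eq]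
        have hIH := ih (A \ ({x, y} : Finset V)) (by omega)
        have hc1 : ((A \ ({x, y} : Finset V)).card : ℝ) = (A.card : ℝ) - 2 := by
          rw [hcard, Nat.cast_sub hm]; norm_num
        have hm' : (2 : ℝ) ≤ (A.card : ℝ) := by exact_mod_cast hm
        rw [hc1] at hstep hIH
        push_cast at hstep hIH ⊢
        nlinarith [hstep, hIH, hm']

lemma wK5_le_one (G : SimpleGraph V) (e : Sym2 V) : wK5 G e ≤ 1 := by
  rw [wK5]
  split_ifs <;> norm_num

lemma wK5_of_four {G : SimpleGraph V} {e : Sym2 V}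
    (h : ∃ s : Finset V, G.IsNClique 4 s ∧ ∀ v ∈ e, v ∈ s) : wK5 G e = 2 / 3 := by
  rw [wK5, if_pos h]

lemma wK5_le_of_three {G : SimpleGraph V} {e : Sym2 V}
    (h : ∃ s : Finset V, G.IsNClique 3 s ∧ ∀ v ∈ e, v ∈ s) : wK5 G e ≤ 4 / 5 := by
  rw [wK5]
  split_ifs <;> norm_num

lemma wK5_le_wA_univ [Fintype V] (G : SimpleGraph V) (e : Sym2 V) :
    wK5 G e ≤ wA G univ e := by
  by_cases h4 : ∃ s : Finset V, s ⊆ univ ∧ G.IsNClique 4 s ∧ ∀ v ∈ e, v ∈ s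
  · rw [wA_of_four h4]
    obtain ⟨s, _, h⟩ := h4
    exact le_of_eq (wK5_of_four ⟨s, h⟩)
  · by_cases h3 : ∃ s : Finset V, s ⊆ univ ∧ G.IsNClique 3 s ∧ ∀ v ∈ e, v ∈ s
    · have hA : wA G univ e = 4 / 5 := by rw [wA, if_neg h4, if_pos h3]
      rw [hA]
      obtain ⟨s, _, h⟩ := h3
      exact wK5_le_of_three ⟨s, h⟩
    · have hA : wA G univ e = 1 := by rw [wA, if_neg h4, if_neg h3]
      rw [hA]
      exact wK5_le_one _ _

end WTaux

theorem weighted_turan_K5_free :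
    ∀ ε : ℝ, 0 < ε → ∃ n₀ : ℕ, ∀ n : ℕ, n₀ ≤ n →
      ∀ G : SimpleGraph (Fin n), G.CliqueFree 5 →
        ∑ e ∈ edgeFinset' G, wK5 G e ≤ (4 / 15 + ε) * n ^ 2 := by
  classical
  intro ε hε
  refine ⟨0, fun n _ G hG5 => ?_⟩
  have hEq : edgeFinset' G = WTaux.EA G univ := by
    ext e
    rw [WTaux.mem_EA]
    simp [edgeFinset', SimpleGraph.mem_edgeFinset]
  have hmain := WTaux.main hG5 (univ : Finset (Fin n)).card univ le_rfl
  have hcardn : ((univ : Finset (Fin n)).card : ℝ) = (n : ℝ) := by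
    simp
  calc ∑ e ∈ edgeFinset' G, wK5 G e
      ≤ ∑ e ∈ WTaux.EA G univ, WTaux.wA G univ e := by
        rw [hEq]
        exact Finset.sum_le_sum (fun e _ => WTaux.wK5_le_wA_univ G e)
    _ ≤ 4 / 15 * ((univ : Finset (Fin n)).card : ℝ) ^ 2 := hmain
    _ = 4 / 15 * (n : ℝ) ^ 2 := by rw [hcardn]
    _ ≤ (4 / 15 + ε) * (n : ℝ) ^ 2 := by nlinarith [sq_nonneg (n : ℝ), hε.le]
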